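/- arXiv:math-ph/0207017 — 7 statements merged into one kernel-verified Lean document; each statement's English description precedes it below -/
import Mathlib

section
/- Let E and F be complex inner product spaces, let k be a positive natural number, let L be a k-dimensional subspace of E, let Φ : E → F be a linear map, and let q : E → ℝ and q' : F → ℝ be functions. Suppose there are constants c ≥ 0, δ' ∈ [0,1) and δ'' ≥ 0 such that for every u ∈ L one has 0 ≤ q(u) ≤ c·‖u‖², ‖u‖² − ‖Φu‖² ≤ δ'·‖u‖², and q'(Φu) − q(u) ≤ δ''·‖u‖². Then Λ_k(q',F) ≤ sup_{u ∈ L, u ≠ 0} q(u)/‖u‖² + (c·δ' + δ'')/(1 − δ'). -/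
/-!
On `L` we have `q u ≤ R ‖u‖²`, with `R` the top Rayleigh quotient of `q` on `L`, and `q u ≤ c ‖u‖²`,
so `q' (Φ u) ≤ q u + δ'' ‖u‖² ≤ (1 - δ') R ‖u‖² + (c δ' + δ'') ‖u‖²`: losing the fraction `δ'` of the
norm costs at most `c δ'` in the form. Dividing by `‖Φ u‖² ≥ (1 - δ') ‖u‖²` bounds every Rayleigh
quotient of `q'` on `Φ L` by `R + (c δ' + δ'') / (1 - δ')`. The same norm bound makes `Φ` injective
on `L`, so `Φ L` is a `k`-dimensional competitor in the min-max.
-/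

open Module

/-- The `k`-th variational (min-max) value of a function `q' : F → ℝ`:
the infimum over all `k`-dimensional subspaces `W` of `F` of
`sup_{v ∈ W, v ≠ 0} q'(v)/‖v‖²`. -/
noncomputable def minMaxVal {F : Type*} [NormedAddCommGroup F] [InnerProductSpace ℂ F]
    (k : ℕ) (q' : F → ℝ) : ℝ :=
  sInf { r : ℝ | ∃ W : Submodule ℂ F, finrank ℂ W = k ∧
    r = sSup { s : ℝ | ∃ v ∈ W, v ≠ 0 ∧ s = q' v / ‖v‖ ^ 2 } }

noncomputable def rayleighSup {E : Type*} [NormedAddCommGroup E] (q : E → ℝ) (S : Set E) : ℝ :=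
  sSup { s : ℝ | ∃ v ∈ S, v ≠ 0 ∧ s = q v / ‖v‖ ^ 2 }

section Rayleigh

variable {E : Type*} [NormedAddCommGroup E] {q : E → ℝ} {S : Set E}

theorem rayleighSup_nonneg (hq : ∀ v ∈ S, 0 ≤ q v) : 0 ≤ rayleighSup q S :=
  Real.sSup_nonneg <| by
    rintro _ ⟨v, hv, -, rfl⟩
    exact div_nonneg (hq v hv) (by positivity)

theorem rayleighSup_le {M : ℝ} (hM : 0 ≤ M) (h : ∀ v ∈ S, v ≠ 0 → q v ≤ M * ‖v‖ ^ 2) :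
    rayleighSup q S ≤ M :=
  Real.sSup_le (by
    rintro _ ⟨v, hv, hv0, rfl⟩
    exact div_le_of_le_mul₀ (by positivity) hM (h v hv hv0)) hM

theorem le_rayleighSup_mul_norm_sq {c : ℝ} (hc : ∀ v ∈ S, q v ≤ c * ‖v‖ ^ 2) {v : E}
    (hv : v ∈ S) : q v ≤ rayleighSup q S * ‖v‖ ^ 2 := by
  rcases eq_or_ne v 0 with rfl | hv0
  · simpa using hc 0 hv
  have hnorm : 0 < ‖v‖ ^ 2 := by positivity
  have hbdd : BddAbove { s : ℝ | ∃ v ∈ S, v ≠ 0 ∧ s = q v / ‖v‖ ^ 2 } := by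
    refine ⟨c, ?_⟩
    rintro _ ⟨w, hw, hw0, rfl⟩
    exact (div_le_iff₀ (by positivity)).2 (hc w hw)
  rw [← div_le_iff₀ hnorm]
  exact le_csSup hbdd ⟨v, hv, hv0, rfl⟩

end Rayleigh

theorem minMaxVal_le_of_finrank_eq {F : Type*} [NormedAddCommGroup F] [InnerProductSpace ℂ F]
    {k : ℕ} {q' : F → ℝ} (W : Submodule ℂ F) (hW : finrank ℂ W = k) {M : ℝ} (hM : 0 ≤ M)
    (hWM : rayleighSup q' W ≤ M) : minMaxVal k q' ≤ M := by
  -- `hM` covers the junk value `sInf s = 0` of a set of reals that is not bounded below.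
  by_cases hbdd : BddBelow { r : ℝ | ∃ W : Submodule ℂ F, finrank ℂ W = k ∧
      r = sSup { s : ℝ | ∃ v ∈ W, v ≠ 0 ∧ s = q' v / ‖v‖ ^ 2 } }
  · exact (csInf_le hbdd ⟨W, hW, rfl⟩).trans hWM
  · rw [minMaxVal, Real.sInf_of_not_bddBelow hbdd]
    exact hM

theorem Submodule.finrank_map_of_disjoint_ker {R M N : Type*} [Ring R] [AddCommGroup M]
    [Module R M] [AddCommGroup N] [Module R N] {f : M →ₗ[R] N} {L : Submodule R M}
    (h : Disjoint L (LinearMap.ker f)) : finrank R (L.map f) = finrank R L := by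
  rw [← LinearMap.range_domRestrict]
  exact LinearMap.finrank_range_of_inj (LinearMap.injective_domRestrict_iff.2 h)

theorem main_lemma_quantitative_general
    {E F : Type*} [NormedAddCommGroup E] [InnerProductSpace ℂ E]
    [NormedAddCommGroup F] [InnerProductSpace ℂ F]
    (k : ℕ) (L : Submodule ℂ E) (hL : finrank ℂ L = k)
    (Φ : E →ₗ[ℂ] F) (q : E → ℝ) (q' : F → ℝ)
    (c δ' δ'' : ℝ) (hc : 0 ≤ c) (hδ'0 : 0 ≤ δ') (hδ'1 : δ' < 1) (hδ'' : 0 ≤ δ'')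
    (hq0 : ∀ u ∈ L, 0 ≤ q u)
    (hqc : ∀ u ∈ L, q u ≤ c * ‖u‖ ^ 2)
    (hnorm : ∀ u ∈ L, ‖u‖ ^ 2 - ‖Φ u‖ ^ 2 ≤ δ' * ‖u‖ ^ 2)
    (hquad : ∀ u ∈ L, q' (Φ u) - q u ≤ δ'' * ‖u‖ ^ 2) :
    minMaxVal k q' ≤
      sSup { s : ℝ | ∃ u ∈ L, u ≠ 0 ∧ s = q u / ‖u‖ ^ 2 } +
        (c * δ' + δ'') / (1 - δ') := by
  change minMaxVal k q' ≤ rayleighSup q L + _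
  set R := rayleighSup q L
  have hgap : 0 < 1 - δ' := sub_pos.2 hδ'1
  have hM : 0 ≤ R + (c * δ' + δ'') / (1 - δ') :=
    add_nonneg (rayleighSup_nonneg hq0) (by positivity)
  have hΦ : ∀ u ∈ L, (1 - δ') * ‖u‖ ^ 2 ≤ ‖Φ u‖ ^ 2 := fun u hu => by linarith [hnorm u hu]
  have hker : Disjoint L (LinearMap.ker Φ) := LinearMap.disjoint_ker.2 fun u hu hu0 => by
    by_contra hne
    have h := hΦ u hu
    rw [hu0, norm_zero] at h
    nlinarith [pow_pos (norm_pos_iff.2 hne) 2]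
  refine minMaxVal_le_of_finrank_eq (L.map Φ) ((L.finrank_map_of_disjoint_ker hker).trans hL) hM
    (rayleighSup_le hM ?_)
  rintro _ ⟨u, hu, rfl⟩ -
  calc q' (Φ u) ≤ (1 - δ') * q u + δ' * q u + δ'' * ‖u‖ ^ 2 := by linarith [hquad u hu]
    _ ≤ (1 - δ') * (R * ‖u‖ ^ 2) + δ' * (c * ‖u‖ ^ 2) + δ'' * ‖u‖ ^ 2 := by
      gcongr
      exacts [le_rayleighSup_mul_norm_sq hqc hu, hqc u hu]
    _ = (R + (c * δ' + δ'') / (1 - δ')) * ((1 - δ') * ‖u‖ ^ 2) := by field_simp; ring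
    _ ≤ (R + (c * δ' + δ'') / (1 - δ')) * ‖Φ u‖ ^ 2 := by gcongr; exact hΦ u hu

theorem main_lemma_quantitative
    {E F : Type*} [NormedAddCommGroup E] [InnerProductSpace ℂ E]
    [NormedAddCommGroup F] [InnerProductSpace ℂ F]
    (k : ℕ) (hk : 0 < k) (L : Submodule ℂ E) (hL : finrank ℂ L = k)
    (Φ : E →ₗ[ℂ] F) (q : E → ℝ) (q' : F → ℝ)
    (c δ' δ'' : ℝ) (hc : 0 ≤ c) (hδ'0 : 0 ≤ δ') (hδ'1 : δ' < 1) (hδ'' : 0 ≤ δ'')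
    (hq0 : ∀ u ∈ L, 0 ≤ q u)
    (hqc : ∀ u ∈ L, q u ≤ c * ‖u‖ ^ 2)
    (hnorm : ∀ u ∈ L, ‖u‖ ^ 2 - ‖Φ u‖ ^ 2 ≤ δ' * ‖u‖ ^ 2)
    (hquad : ∀ u ∈ L, q' (Φ u) - q u ≤ δ'' * ‖u‖ ^ 2) :
    minMaxVal k q' ≤
      sSup { s : ℝ | ∃ u ∈ L, u ≠ 0 ∧ s = q u / ‖u‖ ^ 2 } +
        (c * δ' + δ'') / (1 - δ') :=
  main_lemma_quantitative_general k L hL Φ q q' c δ' δ'' hc hδ'0 hδ'1 hδ'' hq0 hqc hnorm hquad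
end

section
/- Let E and F be complex inner product spaces, let k be a positive natural number, let φ₁,…,φ_k be an orthonormal family in E, let Φ : E → F be a linear map, and let η ≥ 0 satisfy |δ_{ij} − ⟨Φφ_i, Φφ_j⟩| ≤ η for all i,j ∈ {1,…,k}, where δ_{ij} is the Kronecker delta. Then for every u in the linear span of φ₁,…,φ_k one has |‖u‖² − ‖Φu‖²| ≤ k·η·‖u‖². -/
/-!
Write `u = ∑ cᵢ φᵢ`. Then `⟪u, u⟫ - ⟪Φ u, Φ u⟫` is the quadratic form at `c` of the difference
`1 - G` of the Gram matrices of `φ` and `Φ ∘ φ`, whose entries are bounded by `η`. Hence it is at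
most `η (∑ |cᵢ|)² ≤ k η ∑ |cᵢ|² = k η ‖u‖²` by Cauchy–Schwarz and orthonormality.
-/

open scoped InnerProductSpace
open Finset Matrix

section

variable {𝕜 E F : Type*} [RCLike 𝕜] [NormedAddCommGroup E] [InnerProductSpace 𝕜 E]
  [NormedAddCommGroup F] [InnerProductSpace 𝕜 F]

theorem norm_inner_self_sub_inner_self (x : E) (y : F) :
    ‖⟪x, x⟫_𝕜 - ⟪y, y⟫_𝕜‖ = |‖x‖ ^ 2 - ‖y‖ ^ 2| := by
  rw [inner_self_eq_norm_sq_to_K, inner_self_eq_norm_sq_to_K, ← RCLike.ofReal_pow,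
    ← RCLike.ofReal_pow, ← RCLike.ofReal_sub, RCLike.norm_ofReal]

theorem Orthonormal.norm_sum_smul_sq {ι : Type*} [Fintype ι] {v : ι → E}
    (hv : Orthonormal 𝕜 v) (c : ι → 𝕜) :
    ‖∑ i, c i • v i‖ ^ 2 = ∑ i, ‖c i‖ ^ 2 := by
  have h : ((‖∑ i, c i • v i‖ ^ 2 : ℝ) : 𝕜) = ((∑ i, ‖c i‖ ^ 2 : ℝ) : 𝕜) := by
    push_cast
    rw [← inner_self_eq_norm_sq_to_K, hv.inner_sum]
    simp only [RCLike.conj_mul]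
  exact_mod_cast h

theorem inner_self_sub_inner_map_self_eq_dotProduct_gram {ι : Type*} [Fintype ι]
    (v : ι → E) (Φ : E →ₗ[𝕜] F) (c : ι → 𝕜) :
    ⟪∑ i, c i • v i, ∑ i, c i • v i⟫_𝕜 - ⟪Φ (∑ i, c i • v i), Φ (∑ i, c i • v i)⟫_𝕜 =
      star c ⬝ᵥ (gram 𝕜 v - gram 𝕜 (Φ ∘ v)) *ᵥ c := by
  simp only [map_sum, map_smul, sub_mulVec, dotProduct_sub, star_dotProduct_gram_mulVec,
    Function.comp_apply]

end

namespace Matrix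

variable {n 𝕜 : Type*} [Fintype n] [RCLike 𝕜]

theorem norm_star_dotProduct_mulVec_le {A : Matrix n n 𝕜} {η : ℝ} (hA : ∀ i j, ‖A i j‖ ≤ η)
    (x y : n → 𝕜) :
    ‖star x ⬝ᵥ A *ᵥ y‖ ≤ η * (∑ i, ‖x i‖) * ∑ j, ‖y j‖ :=
  calc ‖star x ⬝ᵥ A *ᵥ y‖ = ‖∑ i, ∑ j, star (x i) * (A i j * y j)‖ := by
        simp only [dotProduct, mulVec, Pi.star_apply, mul_sum]
    _ ≤ ∑ i, ∑ j, ‖x i‖ * (η * ‖y j‖) := by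
        refine (norm_sum_le _ _).trans (sum_le_sum fun i _ ↦ ?_)
        refine (norm_sum_le _ _).trans (sum_le_sum fun j _ ↦ ?_)
        rw [norm_mul, norm_mul, norm_star]
        gcongr
        exact hA i j
    _ = η * (∑ i, ‖x i‖) * ∑ j, ‖y j‖ := by
        rw [mul_assoc, sum_mul_sum, mul_sum]
        simp only [mul_sum, mul_left_comm η]

theorem norm_star_dotProduct_mulVec_self_le {A : Matrix n n 𝕜} {η : ℝ} (hη : 0 ≤ η)
    (hA : ∀ i j, ‖A i j‖ ≤ η) (x : n → 𝕜) :
    ‖star x ⬝ᵥ A *ᵥ x‖ ≤ Fintype.card n * η * ∑ i, ‖x i‖ ^ 2 := by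
  calc ‖star x ⬝ᵥ A *ᵥ x‖ ≤ η * (∑ i, ‖x i‖) ^ 2 := by
        rw [sq, ← mul_assoc]; exact norm_star_dotProduct_mulVec_le hA x x
    _ ≤ η * (Fintype.card n * ∑ i, ‖x i‖ ^ 2) :=
        mul_le_mul_of_nonneg_left (sq_sum_le_card_mul_sum_sq ..) hη
    _ = Fintype.card n * η * ∑ i, ‖x i‖ ^ 2 := by ring

end Matrix

theorem gram_perturbation_estimate_general
    {E F : Type*} [NormedAddCommGroup E] [InnerProductSpace ℂ E]
    [NormedAddCommGroup F] [InnerProductSpace ℂ F]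
    (k : ℕ) (φ : Fin k → E) (hφ : Orthonormal ℂ φ)
    (Φ : E →ₗ[ℂ] F) (η : ℝ) (hη : 0 ≤ η)
    (hgram : ∀ i j : Fin k,
      ‖(if i = j then (1 : ℂ) else 0) - ⟪Φ (φ i), Φ (φ j)⟫_ℂ‖ ≤ η) :
    ∀ u ∈ Submodule.span ℂ (Set.range φ),
      |‖u‖ ^ 2 - ‖Φ u‖ ^ 2| ≤ k * η * ‖u‖ ^ 2 := by
  intro u hu
  obtain ⟨c, rfl⟩ := (Submodule.mem_span_range_iff_exists_fun ℂ).mp hu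
  have hentries : ∀ i j, ‖(gram ℂ φ - gram ℂ (Φ ∘ φ)) i j‖ ≤ η := by
    simpa [gram_eq_one_iff_orthonormal.mpr hφ, one_apply, gram_apply] using hgram
  rw [← norm_inner_self_sub_inner_self (𝕜 := ℂ),
    inner_self_sub_inner_map_self_eq_dotProduct_gram, hφ.norm_sum_smul_sq]
  simpa only [Fintype.card_fin] using norm_star_dotProduct_mulVec_self_le hη hentries c

theorem gram_perturbation_estimate
    {E F : Type*} [NormedAddCommGroup E] [InnerProductSpace ℂ E]
    [NormedAddCommGroup F] [InnerProductSpace ℂ F]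
    (k : ℕ) (hk : 0 < k) (φ : Fin k → E) (hφ : Orthonormal ℂ φ)
    (Φ : E →ₗ[ℂ] F) (η : ℝ) (hη : 0 ≤ η)
    (hgram : ∀ i j : Fin k,
      ‖(if i = j then (1 : ℂ) else 0) - ⟪Φ (φ i), Φ (φ j)⟫_ℂ‖ ≤ η) :
    ∀ u ∈ Submodule.span ℂ (Set.range φ),
      |‖u‖ ^ 2 - ‖Φ u‖ ^ 2| ≤ k * η * ‖u‖ ^ 2 :=
  gram_perturbation_estimate_general k φ hφ Φ η hη hgram
end

section
/- Let E and F be complex inner product spaces, u ∈ E and v ∈ F with u ≠ 0, and let a, b ∈ ℝ and c ≥ 0, δ' ∈ [0,1), δ'' ≥ 0 be constants such that 0 ≤ a ≤ c·‖u‖², ‖u‖² − ‖v‖² ≤ δ'·‖u‖², and b − a ≤ δ''·‖u‖². Then v ≠ 0 and b/‖v‖² − a/‖u‖² ≤ (c·δ' + δ'')/(1 − δ'). -/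
theorem rayleigh_quotient_comparison
    {E F : Type*} [NormedAddCommGroup E] [InnerProductSpace ℂ E]
    [NormedAddCommGroup F] [InnerProductSpace ℂ F]
    (u : E) (v : F) (hu : u ≠ 0) (a b c δ' δ'' : ℝ)
    (hc : 0 ≤ c) (hδ'0 : 0 ≤ δ') (hδ'1 : δ' < 1) (hδ'' : 0 ≤ δ'')
    (ha0 : 0 ≤ a) (hac : a ≤ c * ‖u‖ ^ 2)
    (hnorm : ‖u‖ ^ 2 - ‖v‖ ^ 2 ≤ δ' * ‖u‖ ^ 2)
    (hba : b - a ≤ δ'' * ‖u‖ ^ 2) :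
    v ≠ 0 ∧ b / ‖v‖ ^ 2 - a / ‖u‖ ^ 2 ≤ (c * δ' + δ'') / (1 - δ') := by
  have hU : (0:ℝ) < ‖u‖ ^ 2 := by
    have := norm_pos_iff.mpr hu
    positivity
  set U := ‖u‖ ^ 2 with hUdef
  set V := ‖v‖ ^ 2 with hVdef
  have hV : (1 - δ') * U ≤ V := by nlinarith
  have hVpos : (0:ℝ) < V := lt_of_lt_of_le (by nlinarith) hV
  have hv : v ≠ 0 := by
    intro h
    rw [h] at hVdef
    simp at hVdef
    nlinarith
  refine ⟨hv, ?_⟩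
  rw [div_sub_div _ _ (ne_of_gt hVpos) (ne_of_gt hU), div_le_div_iff₀ (by positivity) (by linarith)]
  have hd : (0:ℝ) ≤ c * δ' + δ'' := by positivity
  have h1 : a * (U - V) ≤ a * (δ' * U) := mul_le_mul_of_nonneg_left hnorm ha0
  have h2 : a * δ' ≤ c * U * δ' := mul_le_mul_of_nonneg_right hac hδ'0
  have h3 : b * U - V * a ≤ (c * δ' + δ'') * U ^ 2 := by nlinarith
  have h4 := mul_le_mul_of_nonneg_right h3 (by linarith : (0:ℝ) ≤ 1 - δ')
  have h5 := mul_le_mul_of_nonneg_left (mul_le_mul_of_nonneg_right hV hU.le) hd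
  nlinarith
end

section
/- Let d ≥ 3 be a natural number and let ε, ε₀ be real numbers with 0 < 2ε < ε₀. Let r : [0,ε₀] → ℝ be a continuous monotone nondecreasing function with r(t) ≥ ε for all t ∈ [0,ε₀] and r(t) = t for all t ∈ [2ε, ε₀]. Then every continuously differentiable function u : [0,ε₀] → ℂ with u(ε₀) = 0 satisfies ∫_0^{2ε} |u(s)|² r(s)^{d−1} ds ≤ 2·(2^d + 2)·ε² · ∫_0^{ε₀} |u'(t)|² r(t)^{d−1} dt. -/
/-!
Write `w = r ^ (d - 1)`. Since `u` vanishes at `ε₀`, for `s ≤ 2ε` the fundamental theorem of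
calculus and the weighted Cauchy–Schwarz inequality give
`|u(s)|² ≤ (∫₀^ε₀ |u'|² w) · ∫₀^ε₀ w⁻¹`.
Because `r ≥ ε` on `[0, 2ε]` and `r(t) = t` beyond,
`∫₀^ε₀ w⁻¹ ≤ 2ε/ε^(d-1) + 2ε/(2ε)^(d-1)`; this is where `d ≥ 3` enters, as `∫ t^(1-d)` converges
at infinity. Integrating the pointwise bound against `w ≤ (2ε)^(d-1)` over `[0, 2ε]` gives the
claim.
-/

open Set intervalIntegral
open MeasureTheory (volume ae_restrict_iff')

theorem sq_integral_le_integral_sq_mul_mul_integral_inv {a b : ℝ} (hab : a ≤ b)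
    {f w : ℝ → ℝ}
    (hw : ∀ t ∈ Icc a b, 0 < w t) (hf : IntervalIntegrable f volume a b)
    (hfw : IntervalIntegrable (fun t => f t ^ 2 * w t) volume a b)
    (hw' : IntervalIntegrable (fun t => (w t)⁻¹) volume a b) :
    (∫ t in a..b, f t) ^ 2 ≤ (∫ t in a..b, f t ^ 2 * w t) * ∫ t in a..b, (w t)⁻¹ := by
  have hquad : ∀ x : ℝ, 0 ≤ (∫ t in a..b, f t ^ 2 * w t) * (x * x)
      + (-2 * ∫ t in a..b, f t) * x + ∫ t in a..b, (w t)⁻¹ := by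
    intro x
    have hpt : ∀ t ∈ Icc a b, 0 ≤ x ^ 2 * (f t ^ 2 * w t) - 2 * x * f t + (w t)⁻¹ := by
      intro t ht
      have hwt := hw t ht
      have : x ^ 2 * (f t ^ 2 * w t) - 2 * x * f t + (w t)⁻¹
          = (x * f t * w t - 1) ^ 2 / w t := by
        field_simp
        ring
      rw [this]
      positivity
    have : 0 ≤ ∫ t in a..b, x ^ 2 * (f t ^ 2 * w t) - 2 * x * f t + (w t)⁻¹ :=
      integral_nonneg hab hpt
    rw [integral_add ((hfw.const_mul _).sub (hf.const_mul _)) hw',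
      integral_sub (hfw.const_mul _) (hf.const_mul _), integral_const_mul, integral_const_mul]
      at this
    linarith
  have := discrim_le_zero hquad
  rw [discrim] at this
  nlinarith

theorem integral_inv_pow_le {b c : ℝ} {k : ℕ} (hc : 0 < c) (hcb : c ≤ b) (hk : 2 ≤ k) :
    ∫ t in c..b, (t ^ k)⁻¹ ≤ c / c ^ k := by
  have hzpow : ∫ t in c..b, (t ^ k)⁻¹ = ∫ t in c..b, t ^ (-(k : ℤ)) :=
    integral_congr fun t _ => by rw [zpow_neg, zpow_natCast]
  have hc_pow : c ^ (-(k : ℤ) + 1) = c / c ^ k := by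
    rw [zpow_add₀ hc.ne', zpow_neg, zpow_natCast, zpow_one, inv_mul_eq_div]
  have hb_pow : 0 ≤ b ^ (-(k : ℤ) + 1) := zpow_nonneg (hc.le.trans hcb) _
  have hc_pow_nonneg : 0 ≤ c ^ (-(k : ℤ) + 1) := zpow_nonneg hc.le _
  have hk' : (2 : ℝ) ≤ k := by exact_mod_cast hk
  have hzero : (0 : ℝ) ∉ uIcc c b := by
    rw [uIcc_of_le hcb]
    exact fun h => hc.not_ge h.1
  rw [hzpow, integral_zpow (Or.inr ⟨by omega, hzero⟩), ← hc_pow]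
  push_cast
  rw [div_le_iff_of_neg (by linarith)]
  nlinarith

theorem integral_inv_pow_profile_le {ε ε₀ : ℝ} {r : ℝ → ℝ} {k : ℕ} (hk : 2 ≤ k) (hε : 0 < ε)
    (hεε₀ : 2 * ε ≤ ε₀) (hr : ContinuousOn r (Icc 0 ε₀)) (hrε : ∀ t ∈ Icc 0 ε₀, ε ≤ r t)
    (hrt : ∀ t ∈ Icc (2 * ε) ε₀, r t = t) :
    ∫ t in 0..ε₀, (r t ^ k)⁻¹ ≤ 2 * ε / ε ^ k + 2 * ε / (2 * ε) ^ k := by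
  have hinv : ContinuousOn (fun t => (r t ^ k)⁻¹) (Icc 0 ε₀) :=
    (hr.pow k).inv₀ fun t ht => (pow_pos (hε.trans_le (hrε t ht)) k).ne'
  rw [← integral_add_adjacent_intervals
    ((hinv.mono (Icc_subset_Icc_right hεε₀)).intervalIntegrable_of_Icc (by linarith))
    ((hinv.mono (Icc_subset_Icc_left (by linarith))).intervalIntegrable_of_Icc hεε₀)]
  gcongr
  · calc ∫ t in 0..2 * ε, (r t ^ k)⁻¹ ≤ ∫ t in 0..2 * ε, (ε ^ k)⁻¹ :=
          integral_mono_on (by linarith)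
            ((hinv.mono (Icc_subset_Icc_right hεε₀)).intervalIntegrable_of_Icc (by linarith))
            intervalIntegrable_const fun t ht => by
              gcongr
              exact hrε t ⟨ht.1, ht.2.trans hεε₀⟩
      _ = 2 * ε / ε ^ k := by simp [div_eq_mul_inv]
  · rw [integral_congr fun t ht => by rw [hrt t (uIcc_of_le hεε₀ ▸ ht)]]
    exact integral_inv_pow_le (by linarith) hεε₀ hk

section

variable {E : Type*} [NormedAddCommGroup E] [NormedSpace ℝ E] [CompleteSpace E]

theorem norm_sub_le_integral_norm_deriv {u u' : ℝ → E} {a b : ℝ} (hab : a ≤ b)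
    (hu : ∀ t ∈ Icc a b, HasDerivWithinAt u (u' t) (Icc a b) t)
    (hu' : IntervalIntegrable u' volume a b) :
    ‖u b - u a‖ ≤ ∫ t in a..b, ‖u' t‖ := by
  rw [← integral_eq_sub_of_hasDerivAt_of_le hab (fun t ht => (hu t ht).continuousWithinAt)
    (fun t ht => (hu t (Ioo_subset_Icc_self ht)).hasDerivAt (Icc_mem_nhds ht.1 ht.2)) hu']
  exact norm_integral_le_integral_norm hab

theorem sq_norm_le_integral_sq_norm_deriv_mul_mul_integral_inv {u u' : ℝ → E} {w : ℝ → ℝ}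
    {a b s : ℝ} (hs : s ∈ Icc a b) (hu : ∀ t ∈ Icc a b, HasDerivWithinAt u (u' t) (Icc a b) t)
    (hu' : ContinuousOn u' (Icc a b)) (hub : u b = 0)
    (hw : ContinuousOn w (Icc a b)) (hw0 : ∀ t ∈ Icc a b, 0 < w t) :
    ‖u s‖ ^ 2 ≤ (∫ t in a..b, ‖u' t‖ ^ 2 * w t) * ∫ t in a..b, (w t)⁻¹ := by
  have hsub : Icc s b ⊆ Icc a b := Icc_subset_Icc_left hs.1
  have hab : a ≤ b := hs.1.trans hs.2
  have hw_inv : ContinuousOn (fun t => (w t)⁻¹) (Icc a b) := hw.inv₀ fun t ht => (hw0 t ht).ne'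
  have henergy : ContinuousOn (fun t => ‖u' t‖ ^ 2 * w t) (Icc a b) := (hu'.norm.pow 2).mul hw
  have hftc : ‖u s‖ ≤ ∫ t in s..b, ‖u' t‖ := by
    simpa [hub] using norm_sub_le_integral_norm_deriv hs.2 (fun t ht => (hu t (hsub ht)).mono hsub)
      ((hu'.mono hsub).intervalIntegrable_of_Icc hs.2)
  have hmono_interval {g : ℝ → ℝ} (hg : ContinuousOn g (Icc a b)) (hg0 : ∀ t ∈ Icc a b, 0 ≤ g t) :
      ∫ t in s..b, g t ≤ ∫ t in a..b, g t :=
    integral_mono_interval hs.1 hs.2 le_rfl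
      ((ae_restrict_iff' measurableSet_Ioc).2 (Filter.Eventually.of_forall fun t ht =>
        hg0 t (Ioc_subset_Icc_self ht))) (hg.intervalIntegrable_of_Icc hab)
  calc ‖u s‖ ^ 2 ≤ (∫ t in s..b, ‖u' t‖) ^ 2 := by gcongr
    _ ≤ (∫ t in s..b, ‖u' t‖ ^ 2 * w t) * ∫ t in s..b, (w t)⁻¹ :=
      sq_integral_le_integral_sq_mul_mul_integral_inv hs.2 (fun t ht => hw0 t (hsub ht))
        ((hu'.norm.mono hsub).intervalIntegrable_of_Icc hs.2)
        ((henergy.mono hsub).intervalIntegrable_of_Icc hs.2)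
        ((hw_inv.mono hsub).intervalIntegrable_of_Icc hs.2)
    _ ≤ (∫ t in a..b, ‖u' t‖ ^ 2 * w t) * ∫ t in a..b, (w t)⁻¹ := by
      refine mul_le_mul (hmono_interval henergy fun t ht => mul_nonneg (sq_nonneg _) (hw0 t ht).le)
        (hmono_interval hw_inv fun t ht => (inv_pos.2 (hw0 t ht)).le) ?_ ?_
      · exact integral_nonneg hs.2 fun t ht => (inv_pos.2 (hw0 t (hsub ht))).le
      · exact integral_nonneg hab fun t ht => mul_nonneg (sq_nonneg _) (hw0 t ht).le

theorem sq_norm_mul_pow_profile_le {ε ε₀ s : ℝ} {r : ℝ → ℝ} {u u' : ℝ → E} {k : ℕ}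
    (hk : 2 ≤ k) (hε : 0 < ε) (hεε₀ : 2 * ε ≤ ε₀) (hr : ContinuousOn r (Icc 0 ε₀))
    (hmono : MonotoneOn r (Icc 0 ε₀))
    (hrε : ∀ t ∈ Icc 0 ε₀, ε ≤ r t) (hrt : ∀ t ∈ Icc (2 * ε) ε₀, r t = t)
    (hu : ∀ t ∈ Icc 0 ε₀, HasDerivWithinAt u (u' t) (Icc 0 ε₀) t)
    (hu' : ContinuousOn u' (Icc 0 ε₀)) (hub : u ε₀ = 0) (hs : s ∈ Icc 0 (2 * ε)) :
    ‖u s‖ ^ 2 * r s ^ k ≤ 2 * (2 ^ k + 1) * ε * ∫ t in 0..ε₀, ‖u' t‖ ^ 2 * r t ^ k := by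
  have hcollar : Icc 0 (2 * ε) ⊆ Icc 0 ε₀ := Icc_subset_Icc_right hεε₀
  have hr0 : ∀ t ∈ Icc 0 ε₀, 0 < r t := fun t ht => hε.trans_le (hrε t ht)
  set I := ∫ t in 0..ε₀, ‖u' t‖ ^ 2 * r t ^ k
  have hI : 0 ≤ I := integral_nonneg (by linarith) fun t ht =>
    mul_nonneg (sq_nonneg _) (pow_pos (hr0 t ht) k).le
  have hu_s : ‖u s‖ ^ 2 ≤ I * ∫ t in 0..ε₀, (r t ^ k)⁻¹ :=
    sq_norm_le_integral_sq_norm_deriv_mul_mul_integral_inv (hcollar hs) hu hu' hub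
      (hr.pow k) fun t ht => pow_pos (hr0 t ht) k
  have hr_s : r s ≤ 2 * ε :=
    hrt (2 * ε) ⟨le_rfl, hεε₀⟩ ▸ hmono (hcollar hs) (hcollar ⟨by linarith, le_rfl⟩) hs.2
  have hW := integral_inv_pow_profile_le hk hε hεε₀ hr hrε hrt
  calc ‖u s‖ ^ 2 * r s ^ k ≤ (I * ∫ t in 0..ε₀, (r t ^ k)⁻¹) * (2 * ε) ^ k :=
        mul_le_mul hu_s (pow_le_pow_left₀ (hr0 s (hcollar hs)).le hr_s k)
          (pow_pos (hr0 s (hcollar hs)) k).le ((sq_nonneg _).trans hu_s)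
    _ ≤ I * (2 * ε / ε ^ k + 2 * ε / (2 * ε) ^ k) * (2 * ε) ^ k := by gcongr
    _ = 2 * (2 ^ k + 1) * ε * I := by
        field_simp
        ring

end

theorem non_concentration_cylindrical_end
    (d : ℕ) (hd : 3 ≤ d) (ε ε₀ : ℝ) (hε : 0 < ε) (hεε₀ : 2 * ε < ε₀)
    (r : ℝ → ℝ) (hr : ContinuousOn r (Set.Icc 0 ε₀))
    (hmono : MonotoneOn r (Set.Icc 0 ε₀))
    (hrε : ∀ t ∈ Set.Icc 0 ε₀, ε ≤ r t)
    (hrt : ∀ t ∈ Set.Icc (2 * ε) ε₀, r t = t)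
    (u u' : ℝ → ℂ)
    (hu : ∀ t ∈ Set.Icc 0 ε₀, HasDerivWithinAt u (u' t) (Set.Icc 0 ε₀) t)
    (hu' : ContinuousOn u' (Set.Icc 0 ε₀))
    (hub : u ε₀ = 0) :
    ∫ s in (0 : ℝ)..(2 * ε), ‖u s‖ ^ 2 * r s ^ (d - 1) ≤
      2 * (2 ^ d + 2) * ε ^ 2 *
        ∫ t in (0 : ℝ)..ε₀, ‖u' t‖ ^ 2 * r t ^ (d - 1) := by
  obtain ⟨k, hk, rfl⟩ : ∃ k, 2 ≤ k ∧ d = k + 1 := ⟨d - 1, by omega, by omega⟩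
  rw [Nat.add_sub_cancel]
  have hcollar : Icc 0 (2 * ε) ⊆ Icc 0 ε₀ := Icc_subset_Icc_right hεε₀.le
  have hu_cont : ContinuousOn u (Icc 0 ε₀) := fun t ht => (hu t ht).continuousWithinAt
  calc ∫ s in 0..2 * ε, ‖u s‖ ^ 2 * r s ^ k
      ≤ ∫ _ in 0..2 * ε, 2 * (2 ^ k + 1) * ε * ∫ t in 0..ε₀, ‖u' t‖ ^ 2 * r t ^ k :=
        integral_mono_on (by linarith)
          ((((hu_cont.norm.pow 2).mul (hr.pow k)).mono hcollar).intervalIntegrable_of_Icc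
            (by linarith)) intervalIntegrable_const
          fun s hs => sq_norm_mul_pow_profile_le hk hε hεε₀.le hr hmono hrε hrt hu hu' hub hs
    _ = 2 * (2 ^ (k + 1) + 2) * ε ^ 2 * ∫ t in 0..ε₀, ‖u' t‖ ^ 2 * r t ^ k := by
        rw [integral_const, smul_eq_mul]
        ring
end

section
/- Let d ≥ 2 be a natural number, let r₀ > 0, R > 0 and ε ∈ (0,1] be real numbers with ε^d ≤ R, and let ρ : [−r₀, R] → ℝ be a continuous function with ε ≤ ρ(s) ≤ 1 for all s ∈ [−r₀,R] and ρ(s) = ε for all s ∈ [ε^d, R]. Then every continuously differentiable function u : [−r₀,R] → ℂ with u(−r₀) = 0 satisfies ∫_0^R |u(s)|² ρ(s)^d ds ≤ (1+R)·(R+r₀)·ε² · ∫_{−r₀}^R |u'(s)|² ρ(s)^{d−2} ds. -/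
/-!
Since `u` vanishes at `-r₀`, the fundamental theorem of calculus and Cauchy–Schwarz bound
`‖u s‖²` by `(R + r₀) ∫ ‖u'‖²` everywhere, so the left side is at most that constant times the
mass `∫₀ᴿ ρ^d`. That mass is at most `ε^d + R ε^d`, because `ρ ≤ 1` on the short piece
`[0, ε^d]` and `ρ = ε` beyond it. Finally `ε^d = ε² ε^(d-2)` and `ε^(d-2) ≤ ρ^(d-2)`, which turns
the unweighted energy into the weighted one.
-/

open MeasureTheory intervalIntegral Set

theorem sq_intervalIntegral_le_mul_integral_sq {f : ℝ → ℝ} {a b : ℝ} (hab : a ≤ b)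
    (hf : IntervalIntegrable f volume a b)
    (hf2 : IntervalIntegrable (fun x => f x ^ 2) volume a b) :
    (∫ x in a..b, f x) ^ 2 ≤ (b - a) * ∫ x in a..b, f x ^ 2 := by
  have hquad : ∀ t : ℝ, 0 ≤ (b - a) * (t * t) + (-2 * ∫ x in a..b, f x) * t +
      ∫ x in a..b, f x ^ 2 := fun t => by
    have hexpand : ∫ x in a..b, (t - f x) ^ 2 =
        (b - a) * (t * t) + (-2 * ∫ x in a..b, f x) * t + ∫ x in a..b, f x ^ 2 := by
      simp only [sub_sq]
      rw [integral_add (intervalIntegrable_const.sub (hf.const_mul _)) hf2,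
        integral_sub intervalIntegrable_const (hf.const_mul _), intervalIntegral.integral_const,
        intervalIntegral.integral_const_mul, smul_eq_mul]
      ring
    exact hexpand ▸ integral_nonneg hab fun x _ => sq_nonneg _
  have := discrim_le_zero hquad
  rw [discrim] at this
  linarith

theorem norm_sq_le_mul_integral_norm_deriv_sq {E : Type*} [NormedAddCommGroup E]
    [NormedSpace ℝ E] [CompleteSpace E] {u u' : ℝ → E} {a b : ℝ}
    (hu : ∀ s ∈ Icc a b, HasDerivWithinAt u (u' s) (Icc a b) s)
    (hu' : ContinuousOn u' (Icc a b)) (hua : u a = 0) {s : ℝ} (hs : s ∈ Icc a b) :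
    ‖u s‖ ^ 2 ≤ (b - a) * ∫ t in a..b, ‖u' t‖ ^ 2 := by
  have has : Icc a s ⊆ Icc a b := Icc_subset_Icc le_rfl hs.2
  have hftc : u s = ∫ t in a..s, u' t := by
    rw [integral_eq_sub_of_hasDerivAt_of_le hs.1
      (fun x hx => (hu x (has hx)).continuousWithinAt.mono has)
      (fun x hx => (hu x (has (Ioo_subset_Icc_self hx))).hasDerivAt
        (Icc_mem_nhds hx.1 (hx.2.trans_le hs.2)))
      ((hu'.mono has).intervalIntegrable_of_Icc hs.1), hua, sub_zero]
  have hnorm : ‖u s‖ ≤ ∫ t in a..s, ‖u' t‖ :=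
    hftc ▸ norm_integral_le_integral_norm hs.1
  have hsq : ContinuousOn (fun t => ‖u' t‖ ^ 2) (Icc a b) := hu'.norm.pow 2
  calc ‖u s‖ ^ 2 ≤ (∫ t in a..s, ‖u' t‖) ^ 2 := pow_le_pow_left₀ (norm_nonneg _) hnorm 2
    _ ≤ (s - a) * ∫ t in a..s, ‖u' t‖ ^ 2 :=
      sq_intervalIntegral_le_mul_integral_sq hs.1
        ((hu'.norm.mono has).intervalIntegrable_of_Icc hs.1)
        ((hsq.mono has).intervalIntegrable_of_Icc hs.1)
    _ ≤ (b - a) * ∫ t in a..b, ‖u' t‖ ^ 2 :=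
      mul_le_mul (by linarith [hs.2])
        (integral_mono_interval le_rfl hs.1 hs.2
          (Filter.Eventually.of_forall fun t => sq_nonneg _)
          (hsq.intervalIntegrable_of_Icc (hs.1.trans hs.2)))
        (integral_nonneg hs.1 fun t _ => sq_nonneg _) (by linarith [hs.1, hs.2])

theorem intervalIntegral_le_of_le_of_eqOn {g : ℝ → ℝ} {a b c m k : ℝ} (hab : a ≤ b) (hbc : b ≤ c)
    (hg : IntervalIntegrable g volume a c) (hgm : ∀ x ∈ Icc a b, g x ≤ m)
    (hgk : ∀ x ∈ Icc b c, g x = k) :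
    ∫ x in a..c, g x ≤ (b - a) * m + (c - b) * k := by
  have hsub : uIcc a b ⊆ uIcc a c ∧ uIcc b c ⊆ uIcc a c := by
    simp only [uIcc_of_le hab, uIcc_of_le hbc, uIcc_of_le (hab.trans hbc)]
    exact ⟨Icc_subset_Icc le_rfl hbc, Icc_subset_Icc hab le_rfl⟩
  rw [← integral_add_adjacent_intervals (hg.mono_set hsub.1) (hg.mono_set hsub.2),
    integral_congr (fun x hx => hgk x ((uIcc_of_le hbc) ▸ hx)), intervalIntegral.integral_const,
    smul_eq_mul]
  gcongr
  simpa using integral_mono_on hab (hg.mono_set hsub.1) intervalIntegrable_const hgm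

section WeightedBounds

variable {f w : ℝ → ℝ} {a b C : ℝ}

theorem intervalIntegral_mul_le_mul_integral (hab : a ≤ b) (hf : ContinuousOn f (Icc a b))
    (hw : ContinuousOn w (Icc a b)) (hfC : ∀ x ∈ Icc a b, f x ≤ C)
    (hw0 : ∀ x ∈ Icc a b, 0 ≤ w x) :
    ∫ x in a..b, f x * w x ≤ C * ∫ x in a..b, w x := by
  rw [← intervalIntegral.integral_const_mul]
  exact integral_mono_on hab ((hf.mul hw).intervalIntegrable_of_Icc hab)
    ((continuousOn_const.mul hw).intervalIntegrable_of_Icc hab)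
    fun x hx => mul_le_mul_of_nonneg_right (hfC x hx) (hw0 x hx)

theorem mul_integral_le_intervalIntegral_mul (hab : a ≤ b) (hf : ContinuousOn f (Icc a b))
    (hw : ContinuousOn w (Icc a b)) (hCf : ∀ x ∈ Icc a b, C ≤ f x)
    (hw0 : ∀ x ∈ Icc a b, 0 ≤ w x) :
    C * ∫ x in a..b, w x ≤ ∫ x in a..b, w x * f x := by
  rw [← intervalIntegral.integral_const_mul]
  exact integral_mono_on hab ((continuousOn_const.mul hw).intervalIntegrable_of_Icc hab)
    ((hw.mul hf).intervalIntegrable_of_Icc hab)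
    fun x hx => by rw [mul_comm]; exact mul_le_mul_of_nonneg_left (hCf x hx) (hw0 x hx)

end WeightedBounds

theorem non_concentration_conformal_general
    (d : ℕ) (hd : 2 ≤ d) (r₀ R ε : ℝ) (hr₀ : 0 < r₀)
    (hε0 : 0 < ε) (hεR : ε ^ d ≤ R)
    (ρ : ℝ → ℝ) (hρ : ContinuousOn ρ (Set.Icc (-r₀) R))
    (hρlow : ∀ s ∈ Set.Icc (-r₀) R, ε ≤ ρ s)
    (hρup : ∀ s ∈ Set.Icc (-r₀) R, ρ s ≤ 1)
    (hρε : ∀ s ∈ Set.Icc (ε ^ d) R, ρ s = ε)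
    (u u' : ℝ → ℂ)
    (hu : ∀ s ∈ Set.Icc (-r₀) R, HasDerivWithinAt u (u' s) (Set.Icc (-r₀) R) s)
    (hu' : ContinuousOn u' (Set.Icc (-r₀) R))
    (hua : u (-r₀) = 0) :
    ∫ s in (0 : ℝ)..R, ‖u s‖ ^ 2 * ρ s ^ d ≤
      (1 + R) * (R + r₀) * ε ^ 2 *
        ∫ s in (-r₀)..R, ‖u' s‖ ^ 2 * ρ s ^ (d - 2) := by
  have hεd : 0 < ε ^ d := pow_pos hε0 d
  have hR : 0 ≤ R := hεd.le.trans hεR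
  have hI : Icc 0 R ⊆ Icc (-r₀) R := Icc_subset_Icc (by linarith) le_rfl
  have hρ0 : ∀ s ∈ Icc (-r₀) R, 0 ≤ ρ s := fun s hs => hε0.le.trans (hρlow s hs)
  have hρd : ContinuousOn (fun s => ρ s ^ d) (Icc 0 R) := (hρ.pow d).mono hI
  have hu2 : ContinuousOn (fun s => ‖u s‖ ^ 2) (Icc 0 R) :=
    fun s hs => ((hu s (hI hs)).continuousWithinAt.mono hI).norm.pow 2
  set M := ∫ t in (-r₀)..R, ‖u' t‖ ^ 2
  have hM : 0 ≤ M := integral_nonneg (by linarith) fun t _ => sq_nonneg _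
  have hsup : ∀ s ∈ Icc 0 R, ‖u s‖ ^ 2 ≤ (R + r₀) * M := fun s hs => by
    simpa using norm_sq_le_mul_integral_norm_deriv_sq hu hu' hua (hI hs)
  have hmass : ∫ s in (0 : ℝ)..R, ρ s ^ d ≤ (1 + R) * ε ^ d := by
    have hI' : Icc 0 (ε ^ d) ⊆ Icc (-r₀) R := hI.trans' (Icc_subset_Icc le_rfl hεR)
    have := intervalIntegral_le_of_le_of_eqOn (m := 1) hεd.le hεR
      (hρd.intervalIntegrable_of_Icc hR)
      (fun s hs => pow_le_one₀ (hρ0 s (hI' hs)) (hρup s (hI' hs)))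
      (fun s hs => by rw [hρε s hs])
    nlinarith
  calc ∫ s in (0 : ℝ)..R, ‖u s‖ ^ 2 * ρ s ^ d
      ≤ (R + r₀) * M * ∫ s in (0 : ℝ)..R, ρ s ^ d :=
        intervalIntegral_mul_le_mul_integral hR hu2 hρd hsup
          fun s hs => pow_nonneg (hρ0 s (hI hs)) d
    _ ≤ (R + r₀) * M * ((1 + R) * ε ^ d) := by gcongr
    _ = (1 + R) * (R + r₀) * ε ^ 2 * (ε ^ (d - 2) * M) := by rw [← pow_mul_pow_sub ε hd]; ring
    _ ≤ (1 + R) * (R + r₀) * ε ^ 2 * ∫ s in (-r₀)..R, ‖u' s‖ ^ 2 * ρ s ^ (d - 2) := by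
        gcongr
        exact mul_integral_le_intervalIntegral_mul (by linarith) (hρ.pow _) (hu'.norm.pow 2)
          (fun s hs => pow_le_pow_left₀ hε0.le (hρlow s hs) _) fun _ _ => sq_nonneg _

theorem non_concentration_conformal
    (d : ℕ) (hd : 2 ≤ d) (r₀ R ε : ℝ) (hr₀ : 0 < r₀) (hR : 0 < R)
    (hε0 : 0 < ε) (hε1 : ε ≤ 1) (hεR : ε ^ d ≤ R)
    (ρ : ℝ → ℝ) (hρ : ContinuousOn ρ (Set.Icc (-r₀) R))
    (hρlow : ∀ s ∈ Set.Icc (-r₀) R, ε ≤ ρ s)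
    (hρup : ∀ s ∈ Set.Icc (-r₀) R, ρ s ≤ 1)
    (hρε : ∀ s ∈ Set.Icc (ε ^ d) R, ρ s = ε)
    (u u' : ℝ → ℂ)
    (hu : ∀ s ∈ Set.Icc (-r₀) R, HasDerivWithinAt u (u' s) (Set.Icc (-r₀) R) s)
    (hu' : ContinuousOn u' (Set.Icc (-r₀) R))
    (hua : u (-r₀) = 0) :
    ∫ s in (0 : ℝ)..R, ‖u s‖ ^ 2 * ρ s ^ d ≤
      (1 + R) * (R + r₀) * ε ^ 2 *
        ∫ s in (-r₀)..R, ‖u' s‖ ^ 2 * ρ s ^ (d - 2) :=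
  non_concentration_conformal_general d hd r₀ R ε hr₀ hε0 hεR ρ hρ hρlow hρup hρε u u' hu hu' hua
end

section
/- Let L ∈ (0,1), set ℓ = 1 − L, let m be a natural number, and let θ ∈ ℝ satisfy −1 < cos θ < 1. Then there exists ω with mπ/L < ω < (m+1)π/L such that 2·(cos(Lω) − cos θ) = ℓ·ω·sin(Lω). -/
open Real Set

theorem exists_mem_Ioo_eq_zero_of_mul_neg {a b : ℝ} {f : ℝ → ℝ} (hab : a ≤ b)
    (hf : ContinuousOn f (Icc a b)) (hsign : f a * f b < 0) : ∃ x ∈ Ioo a b, f x = 0 := by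
  rcases mul_neg_iff.mp hsign with ⟨ha, hb⟩ | ⟨ha, hb⟩
  · exact intermediate_value_Ioo' hab hf ⟨hb, ha⟩
  · exact intermediate_value_Ioo hab hf ⟨ha, hb⟩

/-- Since `sin` vanishes at both ends of `[mπ, (m+1)π]` while `cos` goes from `±1` to `∓1`, the
product of the endpoint values of `cos x - c - g x * sin x` is `c ^ 2 - 1 < 0`. -/
theorem exists_mem_Ioo_cos_sub_eq_mul_sin (m : ℕ) {c : ℝ} (hc₁ : -1 < c) (hc₂ : c < 1)
    {g : ℝ → ℝ} (hg : Continuous g) :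
    ∃ x ∈ Ioo (m * π) ((m + 1) * π), cos x - c = g x * sin x := by
  have hcos : cos ((m + 1) * π) = -(-1) ^ m := by
    rw [add_one_mul, cos_add_pi, cos_nat_mul_pi]
  have hsin : sin ((m + 1) * π) = 0 := by
    rw [add_one_mul, sin_add_pi, sin_nat_mul_pi, neg_zero]
  have hsign : (cos (m * π) - c - g (m * π) * sin (m * π)) *
      (cos ((m + 1) * π) - c - g ((m + 1) * π) * sin ((m + 1) * π)) < 0 := by
    rw [cos_nat_mul_pi, sin_nat_mul_pi, hcos, hsin]
    have hsq : ((-1 : ℝ) ^ m) ^ 2 = 1 := by rw [← pow_mul, mul_comm, pow_mul]; norm_num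
    nlinarith
  obtain ⟨x, hx, hfx⟩ := exists_mem_Ioo_eq_zero_of_mul_neg
    (f := fun x ↦ cos x - c - g x * sin x) (by nlinarith [pi_pos]) (by fun_prop) hsign
  exact ⟨x, hx, by linarith⟩

theorem exists_solution_branch_general
    (L : ℝ) (hL0 : 0 < L) (m : ℕ) (θ : ℝ)
    (hθ1 : -1 < Real.cos θ) (hθ2 : Real.cos θ < 1) :
    ∃ ω : ℝ, m * Real.pi / L < ω ∧ ω < (m + 1) * Real.pi / L ∧
      2 * (Real.cos (L * ω) - Real.cos θ) = (1 - L) * ω * Real.sin (L * ω) := by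
  -- substitute `x = L * ω`
  obtain ⟨x, ⟨hx₁, hx₂⟩, hx⟩ := exists_mem_Ioo_cos_sub_eq_mul_sin m hθ1 hθ2
    (g := fun x ↦ (1 - L) / (2 * L) * x) (by fun_prop)
  refine ⟨x / L, (div_lt_div_iff_of_pos_right hL0).mpr hx₁,
    (div_lt_div_iff_of_pos_right hL0).mpr hx₂, ?_⟩
  rw [mul_div_cancel₀ x hL0.ne', hx]
  field_simp

theorem exists_solution_branch
    (L : ℝ) (hL0 : 0 < L) (hL1 : L < 1) (m : ℕ) (θ : ℝ)
    (hθ1 : -1 < Real.cos θ) (hθ2 : Real.cos θ < 1) :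
    ∃ ω : ℝ, m * Real.pi / L < ω ∧ ω < (m + 1) * Real.pi / L ∧
      2 * (Real.cos (L * ω) - Real.cos θ) = (1 - L) * ω * Real.sin (L * ω) :=
  exists_solution_branch_general L hL0 m θ hθ1 hθ2
end

section
/- Let L ∈ (0,1), set ℓ = 1 − L, and let m be a natural number. Then there exists ε₀ > 0 such that for every ω with (m+1)π/L − ε₀ < ω < (m+1)π/L one has |cos(Lω) − (ℓ·ω/2)·sin(Lω)| > 1; consequently, for such ω there is no θ ∈ ℝ with 2·(cos(Lω) − cos θ) = ℓ·ω·sin(Lω). -/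
/-!
Write `Lω = (m + 1)π - δ` with `δ ↓ 0` as `ω ↑ (m + 1)π / L`. Then
`|cos (Lω) - c sin (Lω)| = cos δ + c sin δ` with `c = (1 - L)ω / 2` bounded away from `0`,
and `cos δ + c sin δ ≥ 1 - δ² / 2 + (2c / π) δ`, which exceeds `1` for small `δ > 0`:
the sine term wins against the quadratic loss of the cosine.
-/

open Real Filter Topology

theorem one_lt_cos_add_mul_sin {c δ : ℝ} (hδ0 : 0 < δ) (hδπ : δ ≤ π / 2)
    (hδc : δ < 4 * c / π) : 1 < cos δ + c * sin δ := by
  have hc : 0 ≤ c := by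
    have : 0 < 4 * c := (div_pos_iff_of_pos_right pi_pos).mp (hδ0.trans hδc)
    linarith
  have hcos : 1 - δ ^ 2 / 2 ≤ cos δ := one_sub_sq_div_two_le_cos
  have hsin : c * (2 / π * δ) ≤ c * sin δ :=
    mul_le_mul_of_nonneg_left (mul_le_sin hδ0.le hδπ) hc
  have hgain : δ ^ 2 / 2 < c * (2 / π * δ) := by
    calc δ ^ 2 / 2 = δ * (δ / 2) := by ring
      _ < δ * (2 * c / π) := by
        refine mul_lt_mul_of_pos_left ?_ hδ0
        linarith [show 4 * c / π = 2 * (2 * c / π) by ring]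
      _ = c * (2 / π * δ) := by ring
  linarith

theorem cos_sub_mul_sin_nat_mul_pi_sub (n : ℕ) (c δ : ℝ) :
    cos (n * π - δ) - c * sin (n * π - δ) = (-1) ^ n * (cos δ + c * sin δ) := by
  rw [cos_nat_mul_pi_sub, sin_nat_mul_pi_sub]
  ring

theorem eventually_one_lt_abs_cos_sub_mul_sin {L ℓ : ℝ} (hL : 0 < L) (hℓ : 0 < ℓ) {n : ℕ}
    (hn : 0 < n) :
    ∀ᶠ ω in 𝓝[<] (n * π / L), 1 < |cos (L * ω) - ℓ * ω / 2 * sin (L * ω)| := by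
  set A := n * π / L
  have hLA : L * A = n * π := mul_div_cancel₀ _ hL.ne'
  have hδ0 : Tendsto (fun ω => L * (A - ω)) (𝓝[<] A) (𝓝 0) := by
    have := ((by fun_prop : Continuous fun ω => L * (A - ω)).tendsto A)
    simpa using this.mono_left nhdsWithin_le_nhds
  have hδ : Tendsto (fun ω => L * (A - ω)) (𝓝[<] A) (𝓝[>] 0) :=
    tendsto_nhdsWithin_of_tendsto_nhds_of_eventually_within _ hδ0 <| by
      filter_upwards [self_mem_nhdsWithin] with ω hω
      exact mul_pos hL (sub_pos.mpr hω)
  have hc : Tendsto (fun ω => 4 * (ℓ * ω / 2) / π) (𝓝[<] A) (𝓝 (4 * (ℓ * A / 2) / π)) :=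
    ((by fun_prop : Continuous fun ω => 4 * (ℓ * ω / 2) / π).tendsto A).mono_left
      nhdsWithin_le_nhds
  filter_upwards [hδ.eventually self_mem_nhdsWithin,
    hδ0.eventually (gt_mem_nhds (by positivity : (0 : ℝ) < π / 2)),
    hδ0.eventually_lt hc (by positivity)] with ω hpos hπ hsmall
  have hLω : L * ω = n * π - L * (A - ω) := by linear_combination hLA
  rw [hLω, cos_sub_mul_sin_nat_mul_pi_sub, abs_mul, abs_pow, abs_neg, abs_one, one_pow, one_mul]
  exact (one_lt_cos_add_mul_sin hpos hπ.le hsmall).trans_le (le_abs_self _)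

theorem gap_below_band_edge
    (L : ℝ) (hL0 : 0 < L) (hL1 : L < 1) (m : ℕ) :
    ∃ ε₀ > (0 : ℝ), ∀ ω : ℝ,
      (m + 1) * Real.pi / L - ε₀ < ω → ω < (m + 1) * Real.pi / L →
        1 < |Real.cos (L * ω) - (1 - L) * ω / 2 * Real.sin (L * ω)| ∧
        ¬∃ θ : ℝ,
          2 * (Real.cos (L * ω) - Real.cos θ) = (1 - L) * ω * Real.sin (L * ω) := by
  have hgap := eventually_one_lt_abs_cos_sub_mul_sin hL0 (sub_pos.mpr hL1) m.succ_pos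
  push_cast at hgap
  obtain ⟨l, hl, hsub⟩ := mem_nhdsLT_iff_exists_Ioo_subset.mp hgap
  refine ⟨(m + 1) * π / L - l, sub_pos.mpr hl, fun ω hlω hωA => ?_⟩
  have habs : 1 < |cos (L * ω) - (1 - L) * ω / 2 * sin (L * ω)| :=
    hsub ⟨by linarith, hωA⟩
  refine ⟨habs, fun ⟨θ, hθ⟩ => habs.not_ge ?_⟩
  have hcos : cos θ = cos (L * ω) - (1 - L) * ω / 2 * sin (L * ω) := by linear_combination -hθ / 2
  exact hcos ▸ abs_cos_le_one θ
end
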